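/- Suppose E and E' are measurable subsets of ℝ^k, E is contained in the open halfspace W = {v : e'Ω^{-1}v < δ}, and E' ∩ W^c has positive Gaussian measure under N(γ⁰, Ω). Then there exists λ > 0 such that Pr_{N(γ⁰+λe, Ω)}(E') > Pr_{N(γ⁰+λe, Ω)}(E). -/

import Mathlib

open Matrix MeasureTheory

/-- The `k`-variate Gaussian density with mean `γ` and covariance `Ω`. -/
noncomputable def gaussDensity {k : ℕ} (γ : Fin k → ℝ) (Ω : Matrix (Fin k) (Fin k) ℝ)
    (v : Fin k → ℝ) : ℝ :=
  (2 * Real.pi) ^ (-(k : ℝ) / 2) * Ω.det ^ (-(1 : ℝ) / 2) *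
    Real.exp (-(1 / 2) * ((v - γ) ⬝ᵥ Ω⁻¹.mulVec (v - γ)))

/-!
Shifting the mean by `λ • e` multiplies the density of `N(γ⁰, Ω)` by `exp (λ e'Ω⁻¹v)` up to a
positive constant. After also dividing by `exp (λ δ)`, the tilted integrand tends to `0` on the
halfspace `W` (dominated convergence), so the mass of `E ⊆ W` vanishes, while on `E' ∩ Wᶜ` it
dominates the untilted density, so the mass of `E'` stays above a fixed positive number.
-/

open Filter Topology Real

theorem exists_pos_mul_norm_sq_le {E : Type*} [NormedAddCommGroup E] [NormedSpace ℝ E]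
    [FiniteDimensional ℝ E] {Q : E → ℝ} (hQ : Continuous Q)
    (hQ_smul : ∀ (t : ℝ) (x : E), Q (t • x) = t ^ 2 * Q x) (hQ_pos : ∀ x ≠ 0, 0 < Q x) :
    ∃ c, 0 < c ∧ ∀ x, c * ‖x‖ ^ 2 ≤ Q x := by
  rcases subsingleton_or_nontrivial E with hE | hE
  · refine ⟨1, one_pos, fun x => ?_⟩
    simpa [Subsingleton.elim x 0] using (hQ_smul 0 0).ge
  obtain ⟨u, hu, hu_min⟩ := (isCompact_sphere (0 : E) 1).exists_isMinOn
    (NormedSpace.sphere_nonempty.mpr zero_le_one) hQ.continuousOn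
  have hu0 : u ≠ 0 := ne_zero_of_mem_unit_sphere ⟨u, hu⟩
  refine ⟨Q u, hQ_pos u hu0, fun x => ?_⟩
  rcases eq_or_ne x 0 with rfl | hx
  · simpa using (hQ_smul 0 0).ge
  have hx' : 0 < ‖x‖ := norm_pos_iff.mpr hx
  have hxu : ‖x‖⁻¹ • x ∈ Metric.sphere (0 : E) 1 := by
    simp [norm_smul, hx'.ne']
  calc Q u * ‖x‖ ^ 2 ≤ Q (‖x‖⁻¹ • x) * ‖x‖ ^ 2 := by gcongr; exact hu_min hxu
    _ = Q x := by rw [hQ_smul]; field_simp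

theorem Matrix.PosDef.exists_pos_mul_sum_sq_le {ι : Type*} [Fintype ι] {A : Matrix ι ι ℝ}
    (hA : A.PosDef) : ∃ c, 0 < c ∧ ∀ x : ι → ℝ, c * ∑ i, x i ^ 2 ≤ x ⬝ᵥ A *ᵥ x := by
  obtain ⟨c, hc, hcQ⟩ := exists_pos_mul_norm_sq_le (E := EuclideanSpace ℝ ι)
    (Q := fun y => y.ofLp ⬝ᵥ A *ᵥ y.ofLp) (by fun_prop)
    (fun t y => by
      simp only [WithLp.ofLp_smul, mulVec_smul, dotProduct_smul, smul_dotProduct, smul_eq_mul]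
      ring)
    (fun y hy => by simpa using hA.dotProduct_mulVec_pos (x := y.ofLp) (by simpa using hy))
  refine ⟨c, hc, fun x => ?_⟩
  simpa [EuclideanSpace.real_norm_sq_eq] using hcQ (WithLp.toLp 2 x)

theorem integrable_exp_neg_mul_sum_sq {ι : Type*} [Fintype ι] {c : ℝ} (hc : 0 < c) :
    Integrable fun x : ι → ℝ => exp (-c * ∑ i, x i ^ 2) := by
  rw [volume_pi]
  refine (Integrable.fintype_prod fun _ : ι => integrable_exp_neg_mul_sq hc).congr
    (Eventually.of_forall fun x => ?_)
  simp only [neg_mul, Finset.mul_sum, exp_sum]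

theorem Matrix.PosDef.integrable_exp_neg_mul_dotProduct_mulVec {ι : Type*} [Fintype ι]
    {A : Matrix ι ι ℝ} (hA : A.PosDef) {b : ℝ} (hb : 0 < b) :
    Integrable fun x : ι → ℝ => exp (-b * (x ⬝ᵥ A *ᵥ x)) := by
  obtain ⟨c, hc, hcA⟩ := hA.exists_pos_mul_sum_sq_le
  refine (integrable_exp_neg_mul_sum_sq (mul_pos hb hc)).mono (by fun_prop)
    (Eventually.of_forall fun x => ?_)
  simp only [norm_eq_abs, abs_exp, exp_le_exp]
  have := hcA x
  nlinarith

section ExponentialTilting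

variable {α : Type*} [MeasurableSpace α] {μ : Measure α} {g s : α → ℝ} {δ : ℝ}

theorem tendsto_setIntegral_exp_mul_sub_of_lt (hs : Measurable s) (hg : Integrable g μ)
    (hint : ∀ l : ℝ, AEStronglyMeasurable (fun x => exp (l * (s x - δ)) * g x) μ) :
    Tendsto (fun l : ℝ => ∫ x in {x | s x < δ}, exp (l * (s x - δ)) * g x ∂μ) atTop (𝓝 0) := by
  have hW : MeasurableSet {x | s x < δ} := measurableSet_lt hs measurable_const
  have h := tendsto_integral_filter_of_dominated_convergence (μ := μ.restrict {x | s x < δ})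
    (l := atTop) (F := fun (l : ℝ) x => exp (l * (s x - δ)) * g x) (f := 0)
    (fun x => ‖g x‖) (Eventually.of_forall fun l => (hint l).restrict) ?_ hg.norm.restrict ?_
  · simpa using h
  · filter_upwards [eventually_ge_atTop 0] with l hl
    filter_upwards [ae_restrict_mem hW] with x hx
    rw [norm_mul, norm_of_nonneg (exp_pos _).le]
    exact mul_le_of_le_one_left (norm_nonneg _)
      (exp_le_one_iff.mpr (mul_nonpos_of_nonneg_of_nonpos hl (sub_neg.mpr hx).le))
  · filter_upwards [ae_restrict_mem hW] with x hx
    simpa using ((tendsto_exp_atBot.comp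
      (tendsto_id.atTop_mul_const_of_neg (sub_neg.mpr hx))).mul_const (g x))

theorem setIntegral_le_setIntegral_exp_mul_sub (hs : Measurable s) (hg : Integrable g μ)
    (hg_nonneg : 0 ≤ g) {l : ℝ}
    (hint : Integrable (fun x => exp (l * (s x - δ)) * g x) μ) (hl : 0 ≤ l) (E' : Set α) :
    ∫ x in E' ∩ {x | s x < δ}ᶜ, g x ∂μ ≤ ∫ x in E', exp (l * (s x - δ)) * g x ∂μ := by
  have hWc : MeasurableSet {x | s x < δ}ᶜ := (measurableSet_lt hs measurable_const).compl
  calc ∫ x in E' ∩ {x | s x < δ}ᶜ, g x ∂μ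
      ≤ ∫ x in E' ∩ {x | s x < δ}ᶜ, exp (l * (s x - δ)) * g x ∂μ := by
        refine integral_mono_ae ?_ hint.integrableOn ?_
        · exact hg.integrableOn
        filter_upwards [ae_restrict_of_ae_restrict_of_subset Set.inter_subset_right
          (ae_restrict_mem hWc)] with x hx
        exact le_mul_of_one_le_left (hg_nonneg x)
          (one_le_exp (mul_nonneg hl (sub_nonneg.mpr (not_lt.mp hx))))
    _ ≤ ∫ x in E', exp (l * (s x - δ)) * g x ∂μ :=
        setIntegral_mono_set hint.integrableOn
          (Eventually.of_forall fun x => mul_nonneg (exp_pos _).le (hg_nonneg x))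
          Set.inter_subset_left.eventuallyLE

theorem eventually_setIntegral_exp_mul_lt (hs : Measurable s) (hg_nonneg : 0 ≤ g)
    (hint : ∀ l : ℝ, Integrable (fun x => exp (l * s x) * g x) μ) {E E' : Set α}
    (hE : E ⊆ {x | s x < δ}) (hpos : 0 < ∫ x in E' ∩ {x | s x < δ}ᶜ, g x ∂μ) :
    ∀ᶠ l in atTop, ∫ x in E, exp (l * s x) * g x ∂μ < ∫ x in E', exp (l * s x) * g x ∂μ := by
  have hshift (l : ℝ) (x : α) :
      exp (l * s x) * g x = exp (l * δ) * (exp (l * (s x - δ)) * g x) := by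
    rw [← mul_assoc, ← exp_add]; ring_nf
  have hint_shift (l : ℝ) : Integrable (fun x => exp (l * (s x - δ)) * g x) μ :=
    ((hint l).const_mul (exp (l * δ))⁻¹).congr (Eventually.of_forall fun x => by
      simp only [hshift l x, inv_mul_cancel_left₀ (exp_pos _).ne'])
  have hg : Integrable g μ := by simpa using hint 0
  filter_upwards [(tendsto_setIntegral_exp_mul_sub_of_lt hs hg
    fun l => (hint_shift l).aestronglyMeasurable).eventually_lt_const hpos,
    eventually_ge_atTop 0] with l hlim hl
  have hshifted :
      ∫ x in E, exp (l * (s x - δ)) * g x ∂μ < ∫ x in E', exp (l * (s x - δ)) * g x ∂μ :=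
    calc ∫ x in E, exp (l * (s x - δ)) * g x ∂μ
        ≤ ∫ x in {x | s x < δ}, exp (l * (s x - δ)) * g x ∂μ :=
          setIntegral_mono_set (hint_shift l).integrableOn
            (Eventually.of_forall fun x => mul_nonneg (exp_pos _).le (hg_nonneg x)) hE.eventuallyLE
      _ < ∫ x in E' ∩ {x | s x < δ}ᶜ, g x ∂μ := hlim
      _ ≤ ∫ x in E', exp (l * (s x - δ)) * g x ∂μ :=
          setIntegral_le_setIntegral_exp_mul_sub hs hg hg_nonneg (hint_shift l) hl E'
  simp only [hshift l, integral_const_mul]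
  exact mul_lt_mul_of_pos_left hshifted (exp_pos _)

end ExponentialTilting

section GaussDensity

variable {k : ℕ} {Ω : Matrix (Fin k) (Fin k) ℝ}

theorem gaussDensity_nonneg (hΩ : 0 ≤ Ω.det) (γ v : Fin k → ℝ) : 0 ≤ gaussDensity γ Ω v := by
  unfold gaussDensity
  have := rpow_nonneg (by positivity : (0 : ℝ) ≤ 2 * π) (-(k : ℝ) / 2)
  have := rpow_nonneg hΩ (-(1 : ℝ) / 2)
  positivity

theorem integrable_gaussDensity (hΩ : Ω.PosDef) (γ : Fin k → ℝ) :
    Integrable (gaussDensity γ Ω) :=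
  (((hΩ.inv.integrable_exp_neg_mul_dotProduct_mulVec (b := 1 / 2) one_half_pos).comp_sub_right
    γ).const_mul ((2 * π) ^ (-(k : ℝ) / 2) * Ω.det ^ (-(1 : ℝ) / 2))).congr
    (Eventually.of_forall fun v => by simp [gaussDensity])

theorem gaussDensity_add_smul (hΩ : Ω.IsSymm) (γ e : Fin k → ℝ) (l : ℝ) (v : Fin k → ℝ) :
    gaussDensity (γ + l • e) Ω v =
      exp (-(l * (e ⬝ᵥ Ω⁻¹ *ᵥ γ)) - l ^ 2 / 2 * (e ⬝ᵥ Ω⁻¹ *ᵥ e)) *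
        (exp (l * (e ⬝ᵥ Ω⁻¹ *ᵥ v)) * gaussDensity γ Ω v) := by
  have hsymm (x y : Fin k → ℝ) : x ⬝ᵥ Ω⁻¹ *ᵥ y = y ⬝ᵥ Ω⁻¹ *ᵥ x := by
    conv_lhs => rw [← hΩ.inv]
    exact dotProduct_transpose_mulVec _ _ _
  unfold gaussDensity
  rw [mul_left_comm, ← mul_assoc, ← exp_add, mul_left_comm, ← exp_add]
  congr 2
  simp only [mulVec_sub, mulVec_add, mulVec_smul, sub_dotProduct, dotProduct_sub, add_dotProduct,
    dotProduct_add, smul_dotProduct, dotProduct_smul, smul_eq_mul]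
  rw [hsymm v e, hsymm γ e, hsymm γ v]
  ring

theorem integrable_exp_mul_gaussDensity (hΩ : Ω.PosDef) (γ e : Fin k → ℝ) (l : ℝ) :
    Integrable fun v => exp (l * (e ⬝ᵥ Ω⁻¹ *ᵥ v)) * gaussDensity γ Ω v :=
  ((integrable_gaussDensity hΩ (γ + l • e)).const_mul
    (exp (-(l * (e ⬝ᵥ Ω⁻¹ *ᵥ γ)) - l ^ 2 / 2 * (e ⬝ᵥ Ω⁻¹ *ᵥ e)))⁻¹).congr
    (Eventually.of_forall fun v => by
      simp only [gaussDensity_add_smul (isHermitian_iff_isSymm.mp hΩ.isHermitian),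
        inv_mul_cancel_left₀ (exp_pos _).ne'])

end GaussDensity

theorem stmt12_general {k : ℕ} (Ω : Matrix (Fin k) (Fin k) ℝ) (hΩ : Ω.PosDef)
    (γ0 e : Fin k → ℝ) (δ : ℝ)
    (E E' : Set (Fin k → ℝ))
    (hEW : E ⊆ {v : Fin k → ℝ | e ⬝ᵥ Ω⁻¹.mulVec v < δ})
    (hpos : 0 < ∫ v in E' ∩ {v : Fin k → ℝ | e ⬝ᵥ Ω⁻¹.mulVec v < δ}ᶜ, gaussDensity γ0 Ω v) :
    ∃ l : ℝ, 0 < l ∧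
      (∫ v in E, gaussDensity (γ0 + l • e) Ω v) <
        ∫ v in E', gaussDensity (γ0 + l • e) Ω v := by
  have hs : Measurable fun v : Fin k → ℝ => e ⬝ᵥ Ω⁻¹ *ᵥ v :=
    (continuous_const.dotProduct (continuous_const.matrix_mulVec continuous_id)).measurable
  obtain ⟨l, hlt, hl⟩ := ((eventually_setIntegral_exp_mul_lt hs
    (gaussDensity_nonneg hΩ.det_pos.le γ0) (integrable_exp_mul_gaussDensity hΩ γ0 e) hEW
    hpos).and (eventually_gt_atTop 0)).exists
  refine ⟨l, hl, ?_⟩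
  simp only [gaussDensity_add_smul (isHermitian_iff_isSymm.mp hΩ.isHermitian), integral_const_mul]
  exact mul_lt_mul_of_pos_left hlt (exp_pos _)

/-- if `E` is contained in the open halfspace `W = {v : e'Ω⁻¹v < δ}` and
`E' ∩ Wᶜ` has positive Gaussian measure under `N(γ⁰, Ω)`, then for some `λ > 0` the
`N(γ⁰+λe, Ω)` probability of `E'` exceeds that of `E`. -/
theorem stmt12 {k : ℕ} (Ω : Matrix (Fin k) (Fin k) ℝ) (hΩ : Ω.PosDef)
    (γ0 e : Fin k → ℝ) (he : e ≠ 0) (δ : ℝ)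
    (E E' : Set (Fin k → ℝ)) (hE : MeasurableSet E) (hE' : MeasurableSet E')
    (hEW : E ⊆ {v : Fin k → ℝ | e ⬝ᵥ Ω⁻¹.mulVec v < δ})
    (hpos : 0 < ∫ v in E' ∩ {v : Fin k → ℝ | e ⬝ᵥ Ω⁻¹.mulVec v < δ}ᶜ, gaussDensity γ0 Ω v) :
    ∃ l : ℝ, 0 < l ∧
      (∫ v in E, gaussDensity (γ0 + l • e) Ω v) <
        ∫ v in E', gaussDensity (γ0 + l • e) Ω v :=
  stmt12_general Ω hΩ γ0 e δ E E' hEW hpos
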